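/- arXiv:2306.07893 — 2 statements merged into one kernel-verified Lean document; each statement's English description precedes it below -/
import Mathlib

section
/- Consider the TvN game with n ≥ 2 creators and attention weights r₁ > r₂ ≥ ⋯ ≥ r_K ≥ 0 = r_{K+1} = ⋯ = rₙ. Then every local maximizer of the welfare W is a global maximizer: if s is a profile at which no single creator can strictly increase W by unilaterally changing her strategy, then W(s) = max_{s'} W(s'). -/
/-- A score vector is "sorted" if it is nonincreasing and takes values in `[0,1]`. -/
def SortedScores (n : ℕ) (σ : Fin n → ℝ) : Prop :=
  (∀ i j : Fin n, i ≤ j → σ j ≤ σ i) ∧ ∀ i, σ i ∈ Set.Icc (0:ℝ) 1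

/-- The sorted score vector consisting of `k` ones followed by zeros. -/
def onesVec (n k : ℕ) : Fin n → ℝ := fun i => if (i : ℕ) < k then 1 else 0

/-- A merit-based monotone mechanism (the class `M³`): `M σ i` is the reward of the
creator holding the `i`-th largest score of the nonincreasing score vector `σ`. -/
structure MeritMonotone (n : ℕ) (M : (Fin n → ℝ) → Fin n → ℝ) : Prop where
  reward_mem : ∀ σ, SortedScores n σ → ∀ i, M σ i ∈ Set.Icc (0:ℝ) 1
  eq_scores : ∀ σ, SortedScores n σ → ∀ i j, σ i = σ j → M σ i = M σ j
  normal_zero : ∀ σ, SortedScores n σ → ∀ i, σ i = 0 → M σ i = 0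
  normal_one : ∀ i : Fin n, onesVec n 1 i = 1 → 0 < M (onesVec n 1) i
  fairness : ∀ σ, SortedScores n σ → ∀ i j : Fin n, i ≤ j → M σ j ≤ M σ i
  neg_ext : ∀ σ σ', SortedScores n σ → SortedScores n σ' → ∀ i, σ' i = σ i →
    (∀ j, j ≠ i → σ j ≤ σ' j) → M σ' i ≤ M σ i
  total_mono : ∀ σ σ', SortedScores n σ → SortedScores n σ' → (∀ j, σ j ≤ σ' j) →
    (∑ i, M σ i) ≤ ∑ i, M σ' i

/-- In the TvN game (strategy `s i : Fin n` = index of the basis vector chosen by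
creator `i`), the number of creators playing `e_j`. -/
def cnt {n : ℕ} (s : Fin n → Fin n) (j : Fin n) : ℕ :=
  (Finset.univ.filter fun i => s i = j).card

/-- Creator `i`'s reward at a user of type `e_j`: the score vector there is
`cnt s j` ones followed by zeros; creator `i` has score `1` iff `s i = j`. -/
def rewardAt {n : ℕ} (M : (Fin n → ℝ) → Fin n → ℝ) (s : Fin n → Fin n)
    (i j : Fin n) : ℝ :=
  if s i = j then M (onesVec n (cnt s j)) ⟨0, i.pos⟩
  else M (onesVec n (cnt s j)) ⟨n - 1, by have := i.pos; omega⟩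

/-- Creator `i`'s total utility in the TvN game: `n+1` users of type `e₁`
(index `0`) and one user of type `e_j` for every other `j`. -/
def utility {n : ℕ} (M : (Fin n → ℝ) → Fin n → ℝ) (s : Fin n → Fin n) (i : Fin n) : ℝ :=
  ∑ j : Fin n, (if (j : ℕ) = 0 then (n + 1 : ℝ) else 1) * rewardAt M s i j

/-- Social welfare of the TvN game with attention weights `r` (0-indexed: `r ⟨0⟩` is the
attention to the top-ranked content): at a user of type `e_j`, the `k`-th largest matching
score is `1` exactly when `k < cnt s j`. -/
def tvnWelfare {n : ℕ} (r : Fin n → ℝ) (s : Fin n → Fin n) : ℝ :=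
  ∑ j : Fin n, (if (j : ℕ) = 0 then (n + 1 : ℝ) else 1) *
    ∑ k : Fin n, (if (k : ℕ) < cnt s j then r k else 0)

/-- A profile `s` is a local maximizer of the welfare `W` if no single creator can
strictly increase `W` by unilaterally changing her strategy. -/
def IsLocalMaxW {n : ℕ} (r : Fin n → ℝ) (s : Fin n → Fin n) : Prop :=
  ∀ (i : Fin n) (s'i : Fin n), tvnWelfare r (Function.update s i s'i) ≤ tvnWelfare r s

namespace Stmt15Aux

open Finset

variable {n : ℕ} (r : Fin n → ℝ)

/-- Partial sums of the attention weights. -/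
def F (c : ℕ) : ℝ := ∑ k : Fin n, if (k : ℕ) < c then r k else 0

/-- User weights. -/
def w (n : ℕ) (j : Fin n) : ℝ := if (j : ℕ) = 0 then (n + 1 : ℝ) else 1

lemma F_zero : F r 0 = 0 := by simp [F]

lemma F_succ {c : ℕ} (hc : c < n) : F r (c + 1) = F r c + r ⟨c, hc⟩ := by
  have h : ∀ k : Fin n, (if (k : ℕ) < c + 1 then r k else 0)
      = (if (k : ℕ) < c then r k else 0) + (if k = (⟨c, hc⟩ : Fin n) then r k else 0) := by
    intro k
    rcases lt_trichotomy (k : ℕ) c with h | h | h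
    · have h1 : (k : ℕ) < c + 1 := by omega
      have h2 : k ≠ (⟨c, hc⟩ : Fin n) := by simp [Fin.ext_iff]; omega
      simp [h, h1, h2]
    · have h1 : (k : ℕ) < c + 1 := by omega
      have h2 : k = (⟨c, hc⟩ : Fin n) := by simp [Fin.ext_iff]; omega
      simp [h1, h2, h]
    · have h1 : ¬ (k : ℕ) < c + 1 := by omega
      have h2 : ¬ (k : ℕ) < c := by omega
      have h3 : k ≠ (⟨c, hc⟩ : Fin n) := by simp [Fin.ext_iff]; omega
      simp [h1, h2, h3]
  simp only [F, h, Finset.sum_add_distrib, Finset.sum_ite_eq', Finset.mem_univ, if_true]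

lemma F_const {c : ℕ} (hc : n ≤ c) : F r c = F r n := by
  apply Finset.sum_congr rfl
  intro k _
  simp [k.isLt, Nat.lt_of_lt_of_le k.isLt hc]

lemma F_le (hn : 0 < n) (hmono : ∀ i j : Fin n, i ≤ j → r j ≤ r i)
    (hnonneg : ∀ i, 0 ≤ r i) : ∀ c : ℕ, F r c ≤ (c : ℝ) * r ⟨0, hn⟩ := by
  intro c
  induction c with
  | zero => simp [F_zero]
  | succ c ih =>
    by_cases hc : c < n
    · rw [F_succ r hc]
      have h1 : r ⟨c, hc⟩ ≤ r ⟨0, hn⟩ := hmono _ _ (by simp [Fin.le_def])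
      push_cast
      nlinarith
    · have h1 : F r (c + 1) = F r c := by
        rw [F_const r (by omega), F_const r (by omega : n ≤ c)]
      rw [h1]
      have := hnonneg ⟨0, hn⟩
      push_cast
      nlinarith

lemma F_mono (hnonneg : ∀ i, 0 ≤ r i) {c d : ℕ} (hcd : c ≤ d) : F r c ≤ F r d := by
  apply Finset.sum_le_sum
  intro k _
  by_cases h : (k : ℕ) < c
  · simp [h, Nat.lt_of_lt_of_le h hcd]
  · by_cases h2 : (k : ℕ) < d <;> simp [h, h2, hnonneg k]

lemma cnt_as_sum (s : Fin n → Fin n) (j : Fin n) :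
    cnt s j = ∑ i : Fin n, if s i = j then 1 else 0 := by
  rw [cnt, Finset.card_filter]

lemma cnt_le (s : Fin n → Fin n) (j : Fin n) : cnt s j ≤ n := by
  have := Finset.card_filter_le (Finset.univ : Finset (Fin n)) (fun i => s i = j)
  simpa [cnt] using this

lemma cnt_sum (s : Fin n → Fin n) : ∑ j, cnt s j = n := by
  have h := Finset.card_eq_sum_card_fiberwise
    (s := (Finset.univ : Finset (Fin n))) (t := Finset.univ) (f := s)
    (fun x _ => Finset.mem_univ (s x))
  simpa [cnt, Finset.card_univ] using h.symm

lemma cnt_pos_exists {s : Fin n → Fin n} {a : Fin n} (h : 1 ≤ cnt s a) : ∃ i, s i = a := by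
  obtain ⟨i, hi⟩ := Finset.card_pos.mp h
  exact ⟨i, (Finset.mem_filter.mp hi).2⟩

lemma cnt_update (s : Fin n → Fin n) (i b j : Fin n) :
    cnt (Function.update s i b) j + (if s i = j then 1 else 0)
      = cnt s j + (if b = j then 1 else 0) := by
  rw [cnt_as_sum, cnt_as_sum]
  rw [← Finset.sum_erase_add Finset.univ _ (Finset.mem_univ i),
      ← Finset.sum_erase_add Finset.univ (fun k => if s k = j then 1 else 0) (Finset.mem_univ i)]
  have h1 : ∀ k ∈ Finset.univ.erase i,
      (if Function.update s i b k = j then 1 else 0) = (if s k = j then 1 else 0) := by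
    intro k hk
    rw [Function.update_of_ne (Finset.ne_of_mem_erase hk)]
  rw [Finset.sum_congr rfl h1, Function.update_self]
  ring

lemma cnt_update' (s : Fin n → Fin n) (i b : Fin n) (hb : b ≠ s i) (j : Fin n) :
    cnt (Function.update s i b) j
      = if j = b then cnt s b + 1 else if j = s i then cnt s (s i) - 1 else cnt s j := by
  have h := cnt_update s i b j
  have hi : i ∈ Finset.univ.filter fun k => s k = s i := by simp
  have hpos : 1 ≤ cnt s (s i) := Finset.card_pos.mpr ⟨i, hi⟩
  by_cases hjb : j = b
  · subst hjb
    have h1 : ¬ (s i = j) := fun hh => hb hh.symm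
    simp [h1] at h
    simp [h]
  · by_cases hja : j = s i
    · subst hja
      have h1 : ¬ (b = s i) := hb
      simp [h1] at h
      simp [hjb]
      omega
    · have h1 : ¬ (s i = j) := fun hh => hja hh.symm
      have h2 : ¬ (b = j) := fun hh => hjb hh.symm
      simp [h1, h2] at h
      simp [hjb, hja, h]

lemma W_eq (s : Fin n → Fin n) : tvnWelfare r s = ∑ j, w n j * F r (cnt s j) := rfl

lemma welfare_update (s : Fin n → Fin n) (i b : Fin n) (hb : b ≠ s i) :
    tvnWelfare r (Function.update s i b)
      = tvnWelfare r s + w n b * (F r (cnt s b + 1) - F r (cnt s b))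
        - w n (s i) * (F r (cnt s (s i)) - F r (cnt s (s i) - 1)) := by
  have hab : s i ∈ Finset.univ.erase b := Finset.mem_erase.mpr ⟨Ne.symm hb, Finset.mem_univ _⟩
  rw [W_eq, W_eq,
      ← Finset.sum_erase_add Finset.univ (fun j => w n j * F r (cnt (Function.update s i b) j))
        (Finset.mem_univ b),
      ← Finset.sum_erase_add _ _ hab,
      ← Finset.sum_erase_add Finset.univ (fun j => w n j * F r (cnt s j)) (Finset.mem_univ b),
      ← Finset.sum_erase_add _ _ hab]
  have hrest : ∀ j ∈ (Finset.univ.erase b).erase (s i),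
      w n j * F r (cnt (Function.update s i b) j) = w n j * F r (cnt s j) := by
    intro j hj
    have hja : j ≠ s i := Finset.ne_of_mem_erase hj
    have hjb : j ≠ b := Finset.ne_of_mem_erase (Finset.mem_of_mem_erase hj)
    rw [cnt_update' s i b hb j, if_neg hjb, if_neg hja]
  rw [Finset.sum_congr rfl hrest, cnt_update' s i b hb (s i), cnt_update' s i b hb b,
      if_pos rfl, if_neg (Ne.symm hb), if_pos rfl]
  ring

lemma LM {s : Fin n → Fin n} (hs : IsLocalMaxW r s) (a b : Fin n) (ha : 1 ≤ cnt s a)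
    (hab : b ≠ a) :
    w n b * (F r (cnt s b + 1) - F r (cnt s b))
      ≤ w n a * (F r (cnt s a) - F r (cnt s a - 1)) := by
  obtain ⟨i, hi⟩ := cnt_pos_exists ha
  have h := hs i b
  rw [welfare_update r s i b (hi ▸ hab), hi] at h
  linarith

end Stmt15Aux
namespace Stmt15Aux

lemma chain_up (X : ℕ → ℝ) (m : ℕ) (h : ∀ t, m ≤ t → X (t + 1) ≤ X t) :
    ∀ t, m ≤ t → X t ≤ X m := by
  intro t ht
  induction t with
  | zero =>
    have h0 : m = 0 := Nat.le_zero.mp ht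
    simp [h0]
  | succ t ih =>
    rcases eq_or_lt_of_le ht with he | hlt
    · exact he ▸ le_rfl
    · have hmt : m ≤ t := by omega
      exact le_trans (h t hmt) (ih hmt)

lemma chain_down (X : ℕ → ℝ) : ∀ m : ℕ, (∀ t, t < m → X t ≤ X (t + 1)) →
    ∀ t, t ≤ m → X t ≤ X m := by
  intro m
  induction m with
  | zero =>
    intro _ t ht
    have h0 : t = 0 := Nat.le_zero.mp ht
    simp [h0]
  | succ m ih =>
    intro h t ht
    rcases eq_or_lt_of_le ht with he | hlt
    · exact he ▸ le_rfl
    · have ht' : t ≤ m := by omega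
      exact le_trans (ih (fun u hu => h u (by omega)) t ht') (h m (by omega))

end Stmt15Aux
open Stmt15Aux

/-- In the TvN game with attention weights
`r₁ > r₂ ≥ ⋯ ≥ r_K ≥ 0 = r_{K+1} = ⋯ = rₙ`, every local maximizer of the welfare
is a global maximizer. -/
theorem stmt15 {n : ℕ} (hn : 2 ≤ n) (K : ℕ) (hK1 : 1 ≤ K) (hKn : K ≤ n)
    (r : Fin n → ℝ)
    (hmono : ∀ i j : Fin n, i ≤ j → r j ≤ r i)
    (hnonneg : ∀ i, 0 ≤ r i)
    (hzero : ∀ k : Fin n, K ≤ (k : ℕ) → r k = 0)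
    (h12 : r ⟨1, by omega⟩ < r ⟨0, by omega⟩)
    (s : Fin n → Fin n) (hs : IsLocalMaxW r s) :
    ∀ s' : Fin n → Fin n, tvnWelfare r s' ≤ tvnWelfare r s := by
  classical
  have hn0 : 0 < n := by omega
  have hn1 : 1 < n := by omega
  have hr1 : r ⟨1, hn1⟩ < r ⟨0, hn0⟩ := h12
  have hr0pos : (0:ℝ) < r ⟨0, hn0⟩ := lt_of_le_of_lt (hnonneg _) hr1
  have hr0 : (0:ℝ) ≤ r ⟨0, hn0⟩ := le_of_lt hr0pos
  have hncast : (0:ℝ) ≤ (n:ℝ) := Nat.cast_nonneg n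
  have hF0 : F r 0 = 0 := F_zero r
  have hF1 : F r 1 = r ⟨0, hn0⟩ := by
    have h := F_succ r hn0
    rw [F_zero] at h
    rw [h]; ring
  have hdrop : ∀ c : ℕ, 2 ≤ c → c ≤ n → F r c - F r (c - 1) < r ⟨0, hn0⟩ := by
    intro c h2 hcn
    have hc1 : c - 1 < n := by omega
    have hFc : F r c = F r (c - 1) + r ⟨c - 1, hc1⟩ := by
      have h := F_succ r hc1
      rwa [show c - 1 + 1 = c from by omega] at h
    have hle : r ⟨c - 1, hc1⟩ ≤ r ⟨1, hn1⟩ := hmono _ _ (by simp [Fin.le_def]; omega)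
    rw [hFc]; linarith
  have hwj0 : w n (⟨0, hn0⟩ : Fin n) = (n + 1 : ℝ) := by simp [w]
  have hw1 : ∀ j : Fin n, j ≠ (⟨0, hn0⟩ : Fin n) → w n j = 1 := by
    intro j hj
    have hj' : (j : ℕ) ≠ 0 := by
      intro h0; exact hj (Fin.ext h0)
    simp [w, hj']
  -- Step 1 : the trend topic is used
  have hm1 : 1 ≤ cnt s ⟨0, hn0⟩ := by
    by_contra hc
    have hc0 : cnt s ⟨0, hn0⟩ = 0 := by omega
    have hex : ∃ a : Fin n, 2 ≤ cnt s a := by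
      by_contra hno
      push_neg at hno
      have hsum := cnt_sum s
      rw [← Finset.sum_erase_add Finset.univ _ (Finset.mem_univ (⟨0, hn0⟩ : Fin n))] at hsum
      have hb : ∑ j ∈ Finset.univ.erase (⟨0, hn0⟩ : Fin n), cnt s j
          ≤ (Finset.univ.erase (⟨0, hn0⟩ : Fin n)).card * 1 := by
        have := Finset.sum_le_card_nsmul (Finset.univ.erase (⟨0, hn0⟩ : Fin n)) (cnt s) 1
          (fun x _ => by have := hno x; omega)
        simpa using this
      have hcard : (Finset.univ.erase (⟨0, hn0⟩ : Fin n)).card = n - 1 := by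
        rw [Finset.card_erase_of_mem (Finset.mem_univ _), Finset.card_univ, Fintype.card_fin]
      omega
    obtain ⟨a, ha2⟩ := hex
    have haj0 : a ≠ (⟨0, hn0⟩ : Fin n) := by
      intro h; rw [h, hc0] at ha2; omega
    have hlm := LM r hs a ⟨0, hn0⟩ (by omega) (Ne.symm haj0)
    rw [hc0, hwj0, hw1 a haj0, hF1, hF0] at hlm
    have hd := hdrop (cnt s a) ha2 (cnt_le s a)
    nlinarith [mul_nonneg hncast hr0]
  -- Step 2 : niche topics hold at most one creator
  have hle1 : ∀ a : Fin n, a ≠ (⟨0, hn0⟩ : Fin n) → cnt s a ≤ 1 := by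
    intro a haj0
    by_contra hc
    have ha2 : 2 ≤ cnt s a := by omega
    have hex : ∃ b : Fin n, b ≠ (⟨0, hn0⟩ : Fin n) ∧ b ≠ a ∧ cnt s b = 0 := by
      by_contra hno
      push_neg at hno
      have hall : ∀ j : Fin n, (if j = a then 2 else 1) ≤ cnt s j := by
        intro j
        by_cases hja : j = a
        · rw [if_pos hja, hja]; exact ha2
        · rw [if_neg hja]
          by_cases hjj0 : j = (⟨0, hn0⟩ : Fin n)
          · rw [hjj0]; exact hm1
          · have := hno j hjj0 hja; omega
      have h1 : ∑ j : Fin n, (if j = a then 2 else 1) ≤ ∑ j : Fin n, cnt s j :=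
        Finset.sum_le_sum (fun j _ => hall j)
      have h2 : ∑ j : Fin n, (if j = a then 2 else 1 : ℕ) = n + 1 := by
        have he : ∀ j : Fin n, (if j = a then 2 else 1 : ℕ) = 1 + (if j = a then 1 else 0) := by
          intro j; by_cases h : j = a <;> simp [h]
        simp [he, Finset.sum_add_distrib, Finset.sum_ite_eq', Finset.card_univ]
      rw [h2, cnt_sum s] at h1
      omega
    obtain ⟨b, hbj0, hba, hb0⟩ := hex
    have hlm := LM r hs a b (by omega) hba
    rw [hb0, hw1 b hbj0, hw1 a haj0, hF1, hF0] at hlm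
    have hd := hdrop (cnt s a) ha2 (cnt_le s a)
    linarith
  -- count structure
  have hmn : cnt s ⟨0, hn0⟩ ≤ n := cnt_le s _
  have hsum := cnt_sum s
  rw [← Finset.sum_erase_add Finset.univ _ (Finset.mem_univ (⟨0, hn0⟩ : Fin n))] at hsum
  have hrest_sum : ∑ j ∈ Finset.univ.erase (⟨0, hn0⟩ : Fin n), cnt s j
      = n - cnt s ⟨0, hn0⟩ := by omega
  set G : ℕ → ℝ := fun t => ((n:ℝ) + 1) * F r t + ((n:ℝ) - t) * r ⟨0, hn0⟩ with hG
  have hF01 : ∀ c : ℕ, c ≤ 1 → F r c = (c : ℝ) * r ⟨0, hn0⟩ := by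
    intro c hc
    interval_cases c
    · simp [hF0]
    · simp [hF1]
  -- welfare of the local max
  have hWs : tvnWelfare r s = G (cnt s ⟨0, hn0⟩) := by
    rw [W_eq, ← Finset.sum_erase_add Finset.univ _ (Finset.mem_univ (⟨0, hn0⟩ : Fin n)), hwj0]
    have hco : ∀ j ∈ Finset.univ.erase (⟨0, hn0⟩ : Fin n),
        w n j * F r (cnt s j) = (cnt s j : ℝ) * r ⟨0, hn0⟩ := by
      intro j hj
      have hjne := Finset.ne_of_mem_erase hj
      rw [hw1 j hjne, hF01 _ (hle1 j hjne), one_mul]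
    rw [Finset.sum_congr rfl hco, ← Finset.sum_mul, ← Nat.cast_sum, hrest_sum,
        Nat.cast_sub hmn]
    simp only [hG]
    ring
  -- welfare upper bound for any profile
  have hWub : ∀ s' : Fin n → Fin n, tvnWelfare r s' ≤ G (cnt s' ⟨0, hn0⟩) := by
    intro s'
    have hmn' : cnt s' ⟨0, hn0⟩ ≤ n := cnt_le s' _
    have hsum' := cnt_sum s'
    rw [← Finset.sum_erase_add Finset.univ _ (Finset.mem_univ (⟨0, hn0⟩ : Fin n))] at hsum'
    have hrest' : ∑ j ∈ Finset.univ.erase (⟨0, hn0⟩ : Fin n), cnt s' j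
        = n - cnt s' ⟨0, hn0⟩ := by omega
    rw [W_eq, ← Finset.sum_erase_add Finset.univ _ (Finset.mem_univ (⟨0, hn0⟩ : Fin n)), hwj0]
    have hb : ∑ j ∈ Finset.univ.erase (⟨0, hn0⟩ : Fin n), w n j * F r (cnt s' j)
        ≤ ∑ j ∈ Finset.univ.erase (⟨0, hn0⟩ : Fin n), (cnt s' j : ℝ) * r ⟨0, hn0⟩ := by
      apply Finset.sum_le_sum
      intro j hj
      rw [hw1 j (Finset.ne_of_mem_erase hj), one_mul]
      exact F_le r hn0 hmono hnonneg _
    have hb2 : ∑ j ∈ Finset.univ.erase (⟨0, hn0⟩ : Fin n), (cnt s' j : ℝ) * r ⟨0, hn0⟩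
        = ((n:ℝ) - cnt s' ⟨0, hn0⟩) * r ⟨0, hn0⟩ := by
      rw [← Finset.sum_mul, ← Nat.cast_sum, hrest', Nat.cast_sub hmn']
    simp only [hG]
    linarith
  -- existence of a singleton niche topic when the trend count is below n
  have honex : cnt s ⟨0, hn0⟩ < n → ∃ a : Fin n, a ≠ (⟨0, hn0⟩ : Fin n) ∧ cnt s a = 1 := by
    intro hmlt
    by_contra hno
    push_neg at hno
    have hz : ∑ j ∈ Finset.univ.erase (⟨0, hn0⟩ : Fin n), cnt s j = 0 :=
      Finset.sum_eq_zero (fun j hj => by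
        have h1 := hle1 j (Finset.ne_of_mem_erase hj)
        have h2 := hno j (Finset.ne_of_mem_erase hj)
        omega)
    omega
  -- existence of an empty niche topic when the trend count is at least 2
  have hzeroex : 2 ≤ cnt s ⟨0, hn0⟩ →
      ∃ b : Fin n, b ≠ (⟨0, hn0⟩ : Fin n) ∧ cnt s b = 0 := by
    intro hm2
    by_contra hno
    push_neg at hno
    have hge : ∀ j ∈ Finset.univ.erase (⟨0, hn0⟩ : Fin n), 1 ≤ cnt s j := by
      intro j hj
      have := hno j (Finset.ne_of_mem_erase hj); omega
    have hcard : (Finset.univ.erase (⟨0, hn0⟩ : Fin n)).card = n - 1 := by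
      rw [Finset.card_erase_of_mem (Finset.mem_univ _), Finset.card_univ, Fintype.card_fin]
    have hgesum := Finset.card_nsmul_le_sum
      (Finset.univ.erase (⟨0, hn0⟩ : Fin n)) (fun j => cnt s j) 1 hge
    simp only [smul_eq_mul, mul_one] at hgesum
    omega
  -- G is nonincreasing above the local-max count
  have hstep_up : ∀ t : ℕ, cnt s ⟨0, hn0⟩ ≤ t → G (t + 1) ≤ G t := by
    intro t hmt
    by_cases htn : t < n
    · have hmlt : cnt s ⟨0, hn0⟩ < n := by omega
      obtain ⟨a, haj0, ha1⟩ := honex hmlt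
      have hlm := LM r hs a ⟨0, hn0⟩ (by omega) (Ne.symm haj0)
      rw [ha1, hw1 a haj0, hwj0, hF1, hF0, F_succ r hmlt] at hlm
      have hkey : ((n:ℝ) + 1) * r ⟨cnt s ⟨0, hn0⟩, hmlt⟩ ≤ r ⟨0, hn0⟩ := by linarith
      have hmo : r ⟨t, htn⟩ ≤ r ⟨cnt s ⟨0, hn0⟩, hmlt⟩ := hmono _ _ (by simp [Fin.le_def]; omega)
      have hmul : ((n:ℝ) + 1) * r ⟨t, htn⟩ ≤ ((n:ℝ) + 1) * r ⟨cnt s ⟨0, hn0⟩, hmlt⟩ :=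
        mul_le_mul_of_nonneg_left hmo (by positivity)
      simp only [hG]
      rw [F_succ r htn]
      push_cast
      linarith
    · have hFc : F r (t + 1) = F r t := by
        rw [F_const r (by omega), F_const r (by omega : n ≤ t)]
      simp only [hG]
      rw [hFc]
      push_cast
      linarith
  -- G is nondecreasing below the local-max count
  have hstep_down : ∀ t : ℕ, t < cnt s ⟨0, hn0⟩ → G t ≤ G (t + 1) := by
    intro t htm
    have htn : t < n := by omega
    have hm1n : cnt s ⟨0, hn0⟩ - 1 < n := by omega
    have hkey : r ⟨0, hn0⟩ ≤ ((n:ℝ) + 1) * r ⟨cnt s ⟨0, hn0⟩ - 1, hm1n⟩ := by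
      by_cases hm2 : 2 ≤ cnt s ⟨0, hn0⟩
      · obtain ⟨b, hbj0, hb0⟩ := hzeroex hm2
        have hlm := LM r hs ⟨0, hn0⟩ b hm1 hbj0
        rw [hb0, hwj0, hw1 b hbj0, hF1, hF0] at hlm
        have hFm : F r (cnt s ⟨0, hn0⟩)
            = F r (cnt s ⟨0, hn0⟩ - 1) + r ⟨cnt s ⟨0, hn0⟩ - 1, hm1n⟩ := by
          have h := F_succ r hm1n
          rwa [show cnt s ⟨0, hn0⟩ - 1 + 1 = cnt s ⟨0, hn0⟩ from by omega] at h
        rw [hFm] at hlm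
        linarith
      · have hmeq : cnt s ⟨0, hn0⟩ - 1 = 0 := by omega
        have heq : (⟨cnt s ⟨0, hn0⟩ - 1, hm1n⟩ : Fin n) = ⟨0, hn0⟩ := by
          simp [Fin.ext_iff, hmeq]
        rw [heq]
        nlinarith
    have hmo : r ⟨cnt s ⟨0, hn0⟩ - 1, hm1n⟩ ≤ r ⟨t, htn⟩ := hmono _ _ (by simp [Fin.le_def]; omega)
    have hmul : ((n:ℝ) + 1) * r ⟨cnt s ⟨0, hn0⟩ - 1, hm1n⟩ ≤ ((n:ℝ) + 1) * r ⟨t, htn⟩ :=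
      mul_le_mul_of_nonneg_left hmo (by positivity)
    simp only [hG]
    rw [F_succ r htn]
    push_cast
    linarith
  -- conclusion
  intro s'
  have h1 := hWub s'
  have h2 : G (cnt s' ⟨0, hn0⟩) ≤ G (cnt s ⟨0, hn0⟩) := by
    rcases le_total (cnt s ⟨0, hn0⟩) (cnt s' ⟨0, hn0⟩) with h | h
    · exact chain_up G _ hstep_up _ h
    · exact chain_down G _ hstep_down _ h
  rw [hWs]
  linarith
end

section
/- Fix integers n ≥ K ≥ 3 and β > 0, and define the engagement-based reward mechanism as follows: for a score vector σ ∈ [0,1]ⁿ, a creator i whose score σᵢ ranks among the K largest (ties broken by a fixed order) receives M(σᵢ; σ₋ᵢ) = (exp(σᵢ/β)/S) · β log S, where S = Σ over the K largest scores σⱼ of exp(σⱼ/β), and all other creators receive 0. Then: (i) the total reward equals β log S and is nondecreasing in each σⱼ (monotonicity); (ii) negative externality holds: if the scores of the creators other than i are componentwise weakly increased while σᵢ is unchanged, creator i's reward weakly decreases (this uses that S ≥ K ≥ 3 > e and that t ↦ (log t)/t is decreasing for t > e). -/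
/-!
The top `K` scores maximise `∑ exp(σⱼ/β)` over all `K`-subsets (an exchange argument), so `S`
is monotone in the scores, and so is the total reward `β log S`. Raising the other scores can
only push creator `i` down the ranking, while it raises `S ≥ K ≥ 3 > e`; on `[e, ∞)` the map
`t ↦ log t / t` is antitone, so `i`'s reward `exp(σᵢ/β) · β · log S / S` does not increase.
-/

/-- The (0-indexed) rank of creator `i` in the score vector `σ`, ties broken by a fixed
order (the index order). Creator `i` is "in the top `K`" iff `rankCount σ i < K`. -/
noncomputable def rankCount {n : ℕ} (σ : Fin n → ℝ) (i : Fin n) : ℕ :=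
  (Finset.univ.filter fun j => σ i < σ j ∨ (σ i = σ j ∧ j < i)).card

/-- `S = ∑_{j in the top K} exp(σ_j / β)`. -/
noncomputable def topS {n : ℕ} (K : ℕ) (β : ℝ) (σ : Fin n → ℝ) : ℝ :=
  ∑ j : Fin n, if rankCount σ j < K then Real.exp (σ j / β) else 0

/-- The engagement-based reward: a creator in the top `K` receives
`(exp(σᵢ/β)/S) · β log S`, all other creators receive `0`. -/
noncomputable def engageReward {n : ℕ} (K : ℕ) (β : ℝ) (σ : Fin n → ℝ) (i : Fin n) : ℝ :=
  if rankCount σ i < K then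
    Real.exp (σ i / β) / topS K β σ * (β * Real.log (topS K β σ))
  else 0

open Finset

namespace Finset

theorem sum_le_sum_of_card_eq_of_forall_le {ι M : Type*} [AddCommMonoid M] [LinearOrder M]
    [IsOrderedAddMonoid M] {s t : Finset ι} {f : ι → M}
    (hcard : #s = #t) (hle : ∀ a ∈ s, ∀ b ∈ t, f a ≤ f b) :
    ∑ a ∈ s, f a ≤ ∑ b ∈ t, f b := by
  rcases s.eq_empty_or_nonempty with rfl | hs
  · rw [card_empty, eq_comm, card_eq_zero] at hcard
    simp [hcard]
  calc ∑ a ∈ s, f a ≤ #s • s.sup' hs f := sum_le_card_nsmul _ _ _ fun a ha => le_sup' f ha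
    _ = #t • s.sup' hs f := by rw [hcard]
    _ ≤ ∑ b ∈ t, f b := card_nsmul_le_sum _ _ _ fun b hb => sup'_le hs f fun a ha => hle a ha b hb

end Finset

namespace rankCount

variable {n : ℕ} {σ σ' : Fin n → ℝ}

theorem lt_of_beats {a b : Fin n} (h : σ b < σ a ∨ (σ b = σ a ∧ a < b)) :
    rankCount σ a < rankCount σ b := by
  refine card_lt_card ⟨fun m hm => ?_, fun hsub => ?_⟩
  · simp only [mem_filter, mem_univ, true_and] at hm ⊢
    rcases h with h | ⟨h, hab⟩ <;> rcases hm with hm | ⟨hm, hma⟩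
    · exact Or.inl (h.trans hm)
    · exact Or.inl (hm ▸ h)
    · exact Or.inl (h ▸ hm)
    · exact Or.inr ⟨h.trans hm, hma.trans hab⟩
  · simpa using hsub (show a ∈ _ by simpa using h)

theorem injective (σ : Fin n → ℝ) : Function.Injective (rankCount σ) := by
  intro a b h
  by_contra hne
  rcases lt_trichotomy (σ a) (σ b) with hab | hab | hab
  · exact (lt_of_beats (Or.inl hab)).ne' h
  · rcases lt_or_gt_of_ne hne with hlt | hlt
    · exact (lt_of_beats (Or.inr ⟨hab.symm, hlt⟩)).ne h
    · exact (lt_of_beats (Or.inr ⟨hab, hlt⟩)).ne' h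
  · exact (lt_of_beats (Or.inl hab)).ne h

theorem lt_card (σ : Fin n → ℝ) (i : Fin n) : rankCount σ i < n := by
  simpa [rankCount] using card_lt_card (filter_ssubset.2 ⟨i, mem_univ i, by simp⟩ :
    univ.filter (fun j => σ i < σ j ∨ (σ i = σ j ∧ j < i)) ⊂ univ)

theorem image_univ (σ : Fin n → ℝ) : univ.image (rankCount σ) = range n :=
  eq_of_subset_of_card_le (fun _ hk => by
      obtain ⟨i, -, rfl⟩ := mem_image.1 hk
      exact mem_range.2 (lt_card σ i))
    (by rw [card_range, card_image_of_injective _ (injective σ), card_univ, Fintype.card_fin])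

theorem le_of_eq_of_le {i : Fin n} (hi : σ' i = σ i) (h : ∀ j, j ≠ i → σ j ≤ σ' j) :
    rankCount σ i ≤ rankCount σ' i := by
  refine card_le_card fun j hj => ?_
  simp only [mem_filter, mem_univ, true_and] at hj ⊢
  have hji : j ≠ i := by rintro rfl; simp at hj
  rw [hi]
  rcases hj with hj | ⟨hj, hji'⟩
  · exact Or.inl (hj.trans_le (h j hji))
  · rcases (hj.trans_le (h j hji)).lt_or_eq with h' | h'
    · exact Or.inl h'
    · exact Or.inr ⟨h', hji'⟩

end rankCount

variable {n K : ℕ} {β : ℝ} {σ σ' : Fin n → ℝ}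

noncomputable def topK (K : ℕ) (σ : Fin n → ℝ) : Finset (Fin n) :=
  univ.filter fun j => rankCount σ j < K

theorem mem_topK {j : Fin n} : j ∈ topK K σ ↔ rankCount σ j < K := by
  simp [topK]

theorem card_topK (hKn : K ≤ n) (σ : Fin n → ℝ) : #(topK K σ) = K := by
  have himage : (topK K σ).image (rankCount σ) = range K := by
    ext k
    simp only [mem_image, mem_topK, mem_range]
    refine ⟨by rintro ⟨i, hi, rfl⟩; exact hi, fun hk => ?_⟩
    obtain ⟨i, -, rfl⟩ := mem_image.1
      ((rankCount.image_univ σ).symm ▸ mem_range.2 (hk.trans_le hKn))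
    exact ⟨i, hk, rfl⟩
  simpa [card_image_of_injective _ (rankCount.injective σ)] using congrArg card himage

theorem le_of_mem_sdiff_topK {A : Finset (Fin n)} {a b : Fin n}
    (ha : a ∈ A \ topK K σ) (hb : b ∈ topK K σ \ A) : σ a ≤ σ b := by
  by_contra! hab
  have ha' := (mem_sdiff.1 ha).2
  have hb' := (mem_sdiff.1 hb).1
  rw [mem_topK] at ha' hb'
  exact ha' ((rankCount.lt_of_beats (Or.inl hab)).trans hb')

theorem sum_le_sum_topK {M : Type*} [AddCommMonoid M] [LinearOrder M] [IsOrderedAddMonoid M]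
    (hKn : K ≤ n) {g : ℝ → M} (hg : Monotone g) {A : Finset (Fin n)}
    (hA : #A = K) : ∑ j ∈ A, g (σ j) ≤ ∑ j ∈ topK K σ, g (σ j) := by
  rw [← sum_inter_add_sum_sdiff A (topK K σ), ← sum_inter_add_sum_sdiff (topK K σ) A,
    inter_comm]
  refine add_le_add le_rfl (sum_le_sum_of_card_eq_of_forall_le ?_
    fun a ha b hb => hg (le_of_mem_sdiff_topK ha hb))
  have h₁ := card_sdiff_add_card_inter A (topK K σ)
  have h₂ := card_sdiff_add_card_inter (topK K σ) A
  rw [inter_comm, card_topK hKn] at h₂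
  omega

theorem topS_eq_sum_topK (K : ℕ) (β : ℝ) (σ : Fin n → ℝ) :
    topS K β σ = ∑ j ∈ topK K σ, Real.exp (σ j / β) := by
  rw [topK, sum_filter]
  rfl

theorem topS_mono (hKn : K ≤ n) (hβ : 0 < β) (h : σ ≤ σ') : topS K β σ ≤ topS K β σ' := by
  have hexp : Monotone fun x => Real.exp (x / β) := fun _ _ hxy =>
    Real.exp_le_exp.2 (div_le_div_of_nonneg_right hxy hβ.le)
  rw [topS_eq_sum_topK, topS_eq_sum_topK]
  calc ∑ j ∈ topK K σ, Real.exp (σ j / β) ≤ ∑ j ∈ topK K σ, Real.exp (σ' j / β) :=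
        sum_le_sum fun j _ => hexp (h j)
    _ ≤ ∑ j ∈ topK K σ', Real.exp (σ' j / β) := sum_le_sum_topK hKn hexp (card_topK hKn σ)

theorem card_le_topS (hKn : K ≤ n) (hβ : 0 < β) (hσ : 0 ≤ σ) : (K : ℝ) ≤ topS K β σ := by
  rw [topS_eq_sum_topK]
  simpa [card_topK hKn] using card_nsmul_le_sum (topK K σ) (fun j => Real.exp (σ j / β)) 1
    fun j _ => Real.one_le_exp (div_nonneg (hσ j) hβ.le)

theorem engageReward_eq (K : ℕ) (β : ℝ) (σ : Fin n → ℝ) (i : Fin n) :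
    engageReward K β σ i = (if i ∈ topK K σ then Real.exp (σ i / β) else 0) *
      (β * (Real.log (topS K β σ) / topS K β σ)) := by
  simp only [engageReward, mem_topK]
  split_ifs <;> ring

theorem sum_engageReward (hS : topS K β σ ≠ 0) :
    ∑ i, engageReward K β σ i = β * Real.log (topS K β σ) := by
  simp_rw [engageReward_eq, ← sum_mul, sum_ite_mem, univ_inter, ← topS_eq_sum_topK]
  field_simp

theorem engageReward_le_of_eq_of_le (hK : Real.exp 1 ≤ K) (hKn : K ≤ n) (hβ : 0 < β)
    (hσ : 0 ≤ σ) {i : Fin n} (hi : σ' i = σ i) (h : ∀ j, j ≠ i → σ j ≤ σ' j) :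
    engageReward K β σ' i ≤ engageReward K β σ i := by
  have hle : σ ≤ σ' := fun j => if hj : j = i then hj ▸ hi.ge else h j hj
  have hSS' : topS K β σ ≤ topS K β σ' := topS_mono hKn hβ hle
  have hS : Real.exp 1 ≤ topS K β σ := hK.trans (card_le_topS hKn hβ hσ)
  have hφ : Real.log (topS K β σ') / topS K β σ' ≤ Real.log (topS K β σ) / topS K β σ :=
    Real.log_div_self_antitoneOn hS (hS.trans hSS') hSS'
  have hS1 : 1 ≤ topS K β σ := (Real.one_le_exp zero_le_one).trans hS
  rw [engageReward_eq, engageReward_eq, hi]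
  by_cases hi' : i ∈ topK K σ'
  · have hiσ : i ∈ topK K σ := by
      rw [mem_topK] at hi' ⊢
      exact (rankCount.le_of_eq_of_le hi h).trans_lt hi'
    rw [if_pos hi', if_pos hiσ]
    gcongr
  · rw [if_neg hi', zero_mul]
    have hφ₀ : 0 ≤ Real.log (topS K β σ) / topS K β σ :=
      div_nonneg (Real.log_nonneg hS1) (zero_le_one.trans hS1)
    split_ifs <;> positivity

/-- For `n ≥ K ≥ 3` and `β > 0`, the engagement-based mechanism on
score vectors in `[0,1]ⁿ` satisfies:
(i) the total reward equals `β log S` and is nondecreasing in each score (monotonicity);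
(ii) negative externality: if the others' scores are componentwise weakly increased
while `σᵢ` is unchanged, creator `i`'s reward weakly decreases. -/
theorem stmt16 {n K : ℕ} (hK : 3 ≤ K) (hKn : K ≤ n) (β : ℝ) (hβ : 0 < β) :
    (∀ σ : Fin n → ℝ, (∀ j, σ j ∈ Set.Icc (0:ℝ) 1) →
        (∑ i, engageReward K β σ i) = β * Real.log (topS K β σ)) ∧
    (∀ σ σ' : Fin n → ℝ, (∀ j, σ j ∈ Set.Icc (0:ℝ) 1) → (∀ j, σ' j ∈ Set.Icc (0:ℝ) 1) →
        (∀ j, σ j ≤ σ' j) →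
        (∑ i, engageReward K β σ i) ≤ ∑ i, engageReward K β σ' i) ∧
    (∀ σ σ' : Fin n → ℝ, (∀ j, σ j ∈ Set.Icc (0:ℝ) 1) → (∀ j, σ' j ∈ Set.Icc (0:ℝ) 1) →
        ∀ i : Fin n, σ' i = σ i → (∀ j, j ≠ i → σ j ≤ σ' j) →
        engageReward K β σ' i ≤ engageReward K β σ i) := by
  have hKe : Real.exp 1 ≤ K := by
    have h3 : (3 : ℝ) ≤ K := by exact_mod_cast hK
    linarith [Real.exp_one_lt_d9]
  have hS : ∀ σ : Fin n → ℝ, (∀ j, σ j ∈ Set.Icc (0:ℝ) 1) → 0 < topS K β σ := fun σ hσ =>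
    (Real.exp_pos 1).trans_le (hKe.trans (card_le_topS hKn hβ fun j => (hσ j).1))
  refine ⟨fun σ hσ => sum_engageReward (hS σ hσ).ne', fun σ σ' hσ hσ' hle => ?_,
    fun σ σ' hσ _ i hi h => engageReward_le_of_eq_of_le hKe hKn hβ (fun j => (hσ j).1) hi h⟩
  rw [sum_engageReward (hS σ hσ).ne', sum_engageReward (hS σ' hσ').ne']
  gcongr
  exacts [hS σ hσ, topS_mono hKn hβ hle]
end
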